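/- arXiv:math/0311213 — 3 statements merged into one kernel-verified Lean document; each statement's English description precedes it below -/
import Mathlib

section
/- Decomposition rule on monomials: for θ > 0, a ∈ ℝ, ω ∈ ℝ \ {0}, and m ∈ ℕ, the limit as n → ∞ of ( exp((a/n)Δ_θ) ∘ exp((aω/n) zD) )^n applied to z^m (each exponential acting as a finite sum on polynomials) equals Σ_{k=0}^m (ω^{-1}(e^{aω}−1))^k / k! · (γ_θ(m)/γ_θ(m−k)) · (e^{aω} z)^{m−k}, i.e., it equals exp(aω zD) exp(ω^{-1}(e^{aω}−1) Δ_θ) z^m. -/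
/-- `Δ_θ f = θ f' + z f''`. -/
noncomputable def Dth (θ : ℝ) (f : ℂ → ℂ) : ℂ → ℂ :=
  fun z => (θ : ℂ) * deriv f z + z * deriv (deriv f) z

/-- `zD : f ↦ z f'`. -/
noncomputable def zD (f : ℂ → ℂ) : ℂ → ℂ := fun z => z * deriv f z

/-- `γ_θ(m) = m! Γ(θ + m)`. -/
noncomputable def gam (θ : ℝ) (m : ℕ) : ℝ := m.factorial * Real.Gamma (θ + m)

/-- `exp(c Δ_θ)` defined by the series expansion (pointwise sum). -/
noncomputable def expD (θ : ℝ) (c : ℂ) (f : ℂ → ℂ) : ℂ → ℂ :=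
  fun z => ∑' k : ℕ, c ^ k / (k.factorial : ℂ) * ((Dth θ)^[k] f z)

/-- `exp(c zD)` defined by the series expansion (pointwise sum). -/
noncomputable def expZD (c : ℂ) (f : ℂ → ℂ) : ℂ → ℂ :=
  fun z => ∑' k : ℕ, c ^ k / (k.factorial : ℂ) * (zD^[k] f z)

open Finset Filter Topology

/-!
Both exponentials preserve the two-parameter family `F(u, v)(z) = (exp(u Δ_θ) w^m)(v z)`:
`exp(s zD)` only rescales the variable, `F(u, v) ↦ F(u, e^s v)`, while `exp(c Δ_θ)` acts by
`F(u, v) ↦ F(u + c v, v)`, a semigroup law that reduces to the binomial theorem because the ratios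
`γ_θ(m) / γ_θ(m - k)` telescope. Starting from `w^m = F(0, 1)`, `n` steps of the splitting give
`F((a/n) ∑_{j=1}^n e^{j a ω / n}, e^{a ω})`; this geometric sum, a Riemann sum of
`∫₀^a e^{ω t} dt`, tends to `(e^{a ω} - 1)/ω`, and `F((e^{a ω} - 1)/ω, e^{a ω})` is
`exp(a ω zD) exp(ω⁻¹(e^{a ω} - 1) Δ_θ) w^m`.
-/

section GammaRatio

variable {θ : ℝ}

lemma gam_pos (hθ : 0 < θ) (p : ℕ) : 0 < gam θ p :=
  mul_pos (by exact_mod_cast p.factorial_pos) (Real.Gamma_pos_of_pos (by positivity))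

lemma gam_succ (hθ : 0 < θ) (p : ℕ) : gam θ (p + 1) = (p + 1) * (θ + p) * gam θ p := by
  rw [gam, gam, Nat.factorial_succ, Nat.cast_succ, ← add_assoc, Real.Gamma_add_one (by positivity)]
  push_cast
  ring

noncomputable def gamRatio (θ : ℝ) (j i : ℕ) : ℂ :=
  if i ≤ j then ((gam θ j / gam θ (j - i) : ℝ) : ℂ) else 0

lemma gamRatio_of_le {j i : ℕ} (h : i ≤ j) :
    gamRatio θ j i = ((gam θ j / gam θ (j - i) : ℝ) : ℂ) :=
  if_pos h

lemma gamRatio_of_lt {j i : ℕ} (h : j < i) : gamRatio θ j i = 0 :=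
  if_neg h.not_ge

lemma gamRatio_zero (hθ : 0 < θ) (j : ℕ) : gamRatio θ j 0 = 1 := by
  simp [gamRatio_of_le, (gam_pos hθ j).ne']

lemma gamRatio_succ (hθ : 0 < θ) (j i : ℕ) :
    gamRatio θ j (i + 1) = gamRatio θ j i * ((j - i : ℕ) * (θ + (j - i : ℕ) - 1)) := by
  rcases lt_or_ge i j with hij | hji
  · obtain ⟨q, hq⟩ : ∃ q, j - i = q + 1 := ⟨j - (i + 1), by omega⟩
    rw [gamRatio_of_le hij, gamRatio_of_le hij.le, hq, show j - (i + 1) = q by omega,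
      gam_succ hθ q]
    have hg : (gam θ q : ℂ) ≠ 0 := mod_cast (gam_pos hθ q).ne'
    have hθq : (θ : ℂ) + q ≠ 0 := mod_cast (by positivity : θ + q ≠ 0)
    push_cast
    field_simp
    ring
  · rw [gamRatio_of_lt (by omega), Nat.sub_eq_zero_of_le hji]
    simp

lemma gamRatio_mul_gamRatio (hθ : 0 < θ) {m j k : ℕ} (hkj : k ≤ j) (hjm : j ≤ m) :
    gamRatio θ m k * gamRatio θ (m - k) (j - k) = gamRatio θ m j := by
  rw [gamRatio_of_le (hkj.trans hjm), gamRatio_of_le (by omega), gamRatio_of_le hjm,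
    show m - k - (j - k) = m - j by omega, ← Complex.ofReal_mul,
    div_mul_div_cancel₀ (gam_pos hθ _).ne']

end GammaRatio

section MonomialSum

variable (s : Finset ℕ) (B : ℕ → ℂ) (e : ℕ → ℕ)

noncomputable def monoSum (z : ℂ) : ℂ := ∑ k ∈ s, B k * z ^ e k

lemma deriv_monoSum :
    deriv (monoSum s B e) = monoSum s (fun k => B k * e k) (fun k => e k - 1) := by
  funext z
  refine (HasDerivAt.fun_sum fun k _ => ?_).deriv
  simpa [mul_assoc] using (hasDerivAt_pow (e k) z).const_mul (B k)

lemma zD_monoSum : zD (monoSum s B e) = monoSum s (fun k => e k * B k) e := by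
  funext z
  rw [zD, deriv_monoSum, monoSum, monoSum, mul_sum]
  refine sum_congr rfl fun k _ => ?_
  rcases e k with _ | p
  · simp
  · simp only [Nat.add_sub_cancel]
    ring

lemma Dth_monoSum (θ : ℝ) :
    Dth θ (monoSum s B e) =
      monoSum s (fun k => B k * (e k * (θ + e k - 1))) (fun k => e k - 1) := by
  funext z
  rw [Dth, deriv_monoSum, deriv_monoSum, monoSum, monoSum, monoSum, mul_sum, mul_sum,
    ← sum_add_distrib]
  refine sum_congr rfl fun k _ => ?_
  rcases e k with _ | _ | p
  · simp
  · simp [mul_comm]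
  · simp only [Nat.add_sub_cancel]
    push_cast
    ring

lemma iterate_zD_monoSum (i : ℕ) :
    zD^[i] (monoSum s B e) = monoSum s (fun k => e k ^ i * B k) e := by
  induction i with
  | zero => simp
  | succ i ih =>
    rw [Function.iterate_succ_apply', ih, zD_monoSum]
    congr 1
    funext k
    ring

lemma iterate_Dth_monoSum {θ : ℝ} (hθ : 0 < θ) (i : ℕ) :
    (Dth θ)^[i] (monoSum s B e) =
      monoSum s (fun k => B k * gamRatio θ (e k) i) (fun k => e k - i) := by
  induction i with
  | zero => simp [gamRatio_zero hθ]
  | succ i ih =>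
    rw [Function.iterate_succ_apply', ih, Dth_monoSum]
    simp only [gamRatio_succ hθ, Nat.sub_sub, mul_assoc]

lemma expZD_monoSum (c : ℂ) :
    expZD c (monoSum s B e) = monoSum s (fun k => Complex.exp (c * e k) * B k) e := by
  funext z
  have hterm (k : ℕ) : HasSum (fun i : ℕ => (c * e k) ^ i / i.factorial * (B k * z ^ e k))
      (Complex.exp (c * e k) * (B k * z ^ e k)) := by
    rw [Complex.exp_eq_exp_ℂ]
    exact (NormedSpace.expSeries_div_hasSum_exp (c * e k)).mul_right _
  refine ((hasSum_sum (s := s) fun k _ => hterm k).congr_fun fun i => ?_).tsum_eq.trans ?_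
  · rw [iterate_zD_monoSum, monoSum, mul_sum]
    exact sum_congr rfl fun k _ => by ring
  · exact sum_congr rfl fun k _ => by ring

lemma expD_monoSum {θ : ℝ} (hθ : 0 < θ) (c z : ℂ) :
    expD θ c (monoSum s B e) z = ∑ k ∈ s, ∑ i ∈ range (e k + 1),
      B k * (c ^ i / i.factorial) * gamRatio θ (e k) i * z ^ (e k - i) := by
  have hterm (k : ℕ) : HasSum (fun i : ℕ => B k * (c ^ i / i.factorial) * gamRatio θ (e k) i *
      z ^ (e k - i)) (∑ i ∈ range (e k + 1),
        B k * (c ^ i / i.factorial) * gamRatio θ (e k) i * z ^ (e k - i)) :=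
    hasSum_sum_of_ne_finset_zero fun i hi => by
      rw [gamRatio_of_lt (by simpa using hi), mul_zero, zero_mul]
  refine ((hasSum_sum fun k _ => hterm k).congr_fun fun i => ?_).tsum_eq
  rw [iterate_Dth_monoSum s B e hθ, monoSum, mul_sum]
  exact sum_congr rfl fun k _ => by ring

end MonomialSum

lemma add_pow_div_factorial {K : Type*} [Field K] [CharZero K] (x y : K) (n : ℕ) :
    (x + y) ^ n / n.factorial =
      ∑ k ∈ range (n + 1), x ^ k / k.factorial * (y ^ (n - k) / (n - k).factorial) := by
  rw [add_pow, sum_div]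
  refine sum_congr rfl fun k hk => ?_
  have hn : (n.factorial : K) ≠ 0 := Nat.cast_ne_zero.mpr n.factorial_ne_zero
  rw [Nat.cast_choose K (Nat.lt_succ_iff.mp (mem_range.mp hk))]
  field_simp

/-- `decompPoly θ m u v z = (exp(u Δ_θ) w^m)(v z)`. -/
noncomputable def decompPoly (θ : ℝ) (m : ℕ) (u v : ℂ) : ℂ → ℂ :=
  monoSum (range (m + 1)) (fun k => u ^ k / k.factorial * gamRatio θ m k * v ^ (m - k))
    (fun k => m - k)

section DecompositionFamily

variable {θ : ℝ} (m : ℕ)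

lemma decompPoly_apply (u v z : ℂ) :
    decompPoly θ m u v z = ∑ k ∈ range (m + 1),
      u ^ k / k.factorial * ((gam θ m / gam θ (m - k) : ℝ) : ℂ) * (v * z) ^ (m - k) := by
  dsimp only [decompPoly, monoSum]
  refine sum_congr rfl fun k hk => ?_
  rw [gamRatio_of_le (Nat.lt_succ_iff.mp (mem_range.mp hk)), mul_pow]
  ring

lemma continuous_decompPoly_left (v z : ℂ) : Continuous fun u => decompPoly θ m u v z := by
  unfold decompPoly monoSum
  fun_prop

lemma decompPoly_zero_one (hθ : 0 < θ) : decompPoly θ m 0 1 = fun w => w ^ m := by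
  funext z
  rw [decompPoly, monoSum, sum_eq_single 0]
  · simp [gamRatio_zero hθ]
  · intro k _ hk
    simp [zero_pow hk]
  · simp

lemma expZD_decompPoly (c u v : ℂ) :
    expZD c (decompPoly θ m u v) = decompPoly θ m u (Complex.exp c * v) := by
  rw [decompPoly, expZD_monoSum]
  congr 1
  funext k
  rw [mul_pow, ← Complex.exp_nat_mul, mul_comm c]
  ring

lemma expD_decompPoly (hθ : 0 < θ) (c u v : ℂ) :
    expD θ c (decompPoly θ m u v) = decompPoly θ m (u + c * v) v := by
  funext z
  set f : ℕ → ℕ → ℂ := fun k i => u ^ k / k.factorial * gamRatio θ m k * v ^ (m - k) *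
    (c ^ i / i.factorial) * gamRatio θ (m - k) i * z ^ (m - k - i)
  calc expD θ c (decompPoly θ m u v) z
      = ∑ k ∈ range (m + 1), ∑ i ∈ range (m + 1 - k), f k i := by
        rw [decompPoly, expD_monoSum _ _ _ hθ]
        refine sum_congr rfl fun k hk => ?_
        rw [show m - k + 1 = m + 1 - k by have := mem_range.mp hk; omega]
    _ = ∑ j ∈ range (m + 1), ∑ k ∈ range (j + 1), f k (j - k) :=
        (sum_range_diag_flip _ _).symm
    _ = decompPoly θ m (u + c * v) v z := by
        dsimp only [decompPoly, monoSum]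
        refine sum_congr rfl fun j hj => ?_
        have hjm := Nat.lt_succ_iff.mp (mem_range.mp hj)
        rw [add_pow_div_factorial, sum_mul, sum_mul, sum_mul]
        refine sum_congr rfl fun k hk => ?_
        have hkj := Nat.lt_succ_iff.mp (mem_range.mp hk)
        have hv : v ^ (m - k) = v ^ (j - k) * v ^ (m - j) := by
          rw [← pow_add]
          congr 1
          omega
        rw [← gamRatio_mul_gamRatio hθ hkj hjm, mul_pow]
        simp only [f, show m - k - (j - k) = m - j by omega, hv]
        ring

lemma iterate_expD_comp_expZD (hθ : 0 < θ) (c s : ℂ) (N : ℕ) :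
    (expD θ c ∘ expZD s)^[N] (fun w => w ^ m) =
      decompPoly θ m (c * ∑ j ∈ range N, Complex.exp s ^ (j + 1)) (Complex.exp s ^ N) := by
  induction N with
  | zero => simp [decompPoly_zero_one m hθ]
  | succ N ih =>
    rw [Function.iterate_succ_apply', ih, Function.comp_apply, expZD_decompPoly,
      expD_decompPoly m hθ, sum_range_succ, pow_succ']
    ring_nf

end DecompositionFamily

lemma cexp_div_nat_pow (t : ℂ) {n : ℕ} (hn : n ≠ 0) : Complex.exp (t / n) ^ n = Complex.exp t := by
  rw [← Complex.exp_nat_mul, mul_div_cancel₀ _ (Nat.cast_ne_zero.mpr hn)]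

lemma tendsto_nat_mul_cexp_div_sub_one (t : ℂ) :
    Tendsto (fun n : ℕ => (n : ℂ) * (Complex.exp (t / n) - 1)) atTop (𝓝 t) := by
  have hderiv : HasDerivAt (fun h => Complex.exp (t * h)) t 0 := by
    simpa using ((hasDerivAt_id (0 : ℂ)).const_mul t).cexp
  have hinv : Tendsto (fun n : ℕ => (n : ℂ)⁻¹) atTop (𝓝[≠] 0) :=
    tendsto_nhdsWithin_iff.mpr ⟨tendsto_inv_atTop_nhds_zero_nat,
      (eventually_ne_atTop 0).mono fun n hn => by simpa using hn⟩
  refine ((hasDerivAt_iff_tendsto_slope_zero.mp hderiv).comp hinv).congr fun n => ?_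
  simp [div_eq_mul_inv]

lemma tendsto_div_mul_geom_sum_cexp (a ω : ℂ) (hω : ω ≠ 0) :
    Tendsto (fun n : ℕ => a / n * ∑ j ∈ range n, Complex.exp (a * ω / n) ^ (j + 1)) atTop
      (𝓝 ((Complex.exp (a * ω) - 1) / ω)) := by
  rcases eq_or_ne a 0 with rfl | ha
  · simp
  have hden := tendsto_nat_mul_cexp_div_sub_one (a * ω)
  have hx : Tendsto (fun n : ℕ => Complex.exp (a * ω / n)) atTop (𝓝 1) := by
    simpa [Function.comp_def] using
      (Complex.continuous_exp.tendsto 0).comp (tendsto_const_div_atTop_nhds_zero_nat _)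
  have hlim := (tendsto_const_nhds (x := a * (Complex.exp (a * ω) - 1))).mul hx |>.div hden
    (mul_ne_zero ha hω)
  rw [mul_one, mul_div_mul_left _ _ ha] at hlim
  refine hlim.congr' ?_
  filter_upwards [hden.eventually_ne (mul_ne_zero ha hω)] with n hn
  have hn0 : (n : ℂ) ≠ 0 := left_ne_zero_of_mul hn
  have hx1 : Complex.exp (a * ω / n) - 1 ≠ 0 := right_ne_zero_of_mul hn
  rw [Pi.div_apply, ← cexp_div_nat_pow (a * ω) (Nat.cast_ne_zero.mp hn0)]
  simp_rw [pow_succ, ← sum_mul, geom_sum_eq (sub_ne_zero.mp hx1)]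
  field_simp

theorem stmt4_general (θ a ω : ℝ) (hθ : 0 < θ) (hω : ω ≠ 0) (m : ℕ) (z : ℂ) :
    Filter.Tendsto
      (fun n : ℕ => ((expD θ ((a : ℂ) / n) ∘ expZD ((a * ω : ℝ) / n))^[n]
        (fun w => w ^ m)) z)
      Filter.atTop
      (nhds (∑ k ∈ Finset.range (m + 1),
        (((Real.exp (a * ω) - 1) / ω : ℝ) : ℂ) ^ k / (k.factorial : ℂ) *
          ((gam θ m / gam θ (m - k) : ℝ) : ℂ) * (((Real.exp (a * ω) : ℝ) : ℂ) * z) ^ (m - k)))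
    ∧
    (∑ k ∈ Finset.range (m + 1),
        (((Real.exp (a * ω) - 1) / ω : ℝ) : ℂ) ^ k / (k.factorial : ℂ) *
          ((gam θ m / gam θ (m - k) : ℝ) : ℂ) * (((Real.exp (a * ω) : ℝ) : ℂ) * z) ^ (m - k))
      = expZD ((a * ω : ℝ) : ℂ)
          (expD θ ((((Real.exp (a * ω) - 1) / ω : ℝ)) : ℂ) (fun w => w ^ m)) z := by
  set C : ℂ := (((Real.exp (a * ω) - 1) / ω : ℝ) : ℂ)
  have hE : ((Real.exp (a * ω) : ℝ) : ℂ) = Complex.exp ((a * ω : ℝ) : ℂ) := Complex.ofReal_exp _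
  rw [hE, ← decompPoly_apply]
  refine ⟨?_, ?_⟩
  · have hiter : ∀ᶠ n : ℕ in atTop,
        decompPoly θ m ((a : ℂ) / n * ∑ j ∈ range n, Complex.exp ((a * ω : ℝ) / n) ^ (j + 1))
          (Complex.exp ((a * ω : ℝ) : ℂ)) z =
        ((expD θ ((a : ℂ) / n) ∘ expZD ((a * ω : ℝ) / n))^[n] (fun w => w ^ m)) z := by
      filter_upwards [eventually_ne_atTop 0] with n hn
      rw [iterate_expD_comp_expZD m hθ, cexp_div_nat_pow _ hn]
    have hU : Tendsto (fun n : ℕ =>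
        (a : ℂ) / n * ∑ j ∈ range n, Complex.exp ((a * ω : ℝ) / n) ^ (j + 1)) atTop (𝓝 C) := by
      push_cast [C]
      exact tendsto_div_mul_geom_sum_cexp a ω (Complex.ofReal_ne_zero.mpr hω)
    exact (((continuous_decompPoly_left m _ z).tendsto C).comp hU).congr' hiter
  · rw [← decompPoly_zero_one m hθ, expD_decompPoly m hθ, expZD_decompPoly]
    simp only [zero_add, mul_one]

theorem stmt4 (θ a ω : ℝ) (hθ : 0 < θ) (hω : ω ≠ 0) (m : ℕ) (hm : 1 ≤ m) (z : ℂ) :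
    Filter.Tendsto
      (fun n : ℕ => ((expD θ ((a : ℂ) / n) ∘ expZD ((a * ω : ℝ) / n))^[n]
        (fun w => w ^ m)) z)
      Filter.atTop
      (nhds (∑ k ∈ Finset.range (m + 1),
        (((Real.exp (a * ω) - 1) / ω : ℝ) : ℂ) ^ k / (k.factorial : ℂ) *
          ((gam θ m / gam θ (m - k) : ℝ) : ℂ) * (((Real.exp (a * ω) : ℝ) : ℂ) * z) ^ (m - k)))
    ∧
    (∑ k ∈ Finset.range (m + 1),
        (((Real.exp (a * ω) - 1) / ω : ℝ) : ℂ) ^ k / (k.factorial : ℂ) *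
          ((gam θ m / gam θ (m - k) : ℝ) : ℂ) * (((Real.exp (a * ω) : ℝ) : ℂ) * z) ^ (m - k))
      = expZD ((a * ω : ℝ) : ℂ)
          (expD θ ((((Real.exp (a * ω) - 1) / ω : ℝ)) : ℂ) (fun w => w ^ m)) z :=
  stmt4_general θ a ω hθ hω m z
end

section
/- For θ > 0, a > 0, and m ∈ ℕ₀, the integral representation holds: e^{−z/a} ∫_0^∞ w_θ(sz/a) (as)^m s^{θ−1} e^{−s} ds = Σ_{k=0}^m (a^k/k!) (γ_θ(m)/γ_θ(m−k)) z^{m−k} = (exp(aΔ_θ) z^m), where w_θ(ξ) = Σ_{k=0}^∞ ξ^k / (k! Γ(θ+k)) and γ_θ(m) = m! Γ(θ+m). -/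
/-- `w_θ(ξ) = Σ_k ξ^k / (k! Γ(θ+k))`. -/
noncomputable def wth (θ : ℝ) (ξ : ℂ) : ℂ :=
  ∑' k : ℕ, ξ ^ k / ((k.factorial : ℂ) * ((Real.Gamma (θ + k) : ℝ) : ℂ))

/-!
Put `x = z / a`. Expanding `w_θ` and integrating termwise against `s^(θ-1) e^(-s)` turns the
integral into `a^m Σ_j x^j / j! · (θ+j)_m`, where `(θ+j)_m = Γ(θ+m+j) / Γ(θ+j)` is the rising
factorial (`ascPochhammer`). Multiplying by `e^(-x)` as a Cauchy product, the coefficient of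
`x^n / n!` becomes the `n`-th forward difference at `0` of `j ↦ (θ+j)_m`, which is
`m! / (m-n)! · (θ+n)_(m-n)`. It vanishes for `n > m`, and reindexing by `k = m - n` gives the sum.
-/

open Finset Polynomial fwdDiff MeasureTheory

section ForwardDifference

variable {R : Type*} [CommRing R]

lemma fwdDiff_ascPochhammer_eval_succ (m : ℕ) :
    Δ_[1] (fun t : R ↦ (ascPochhammer R (m + 1)).eval t) =
      fun t ↦ (m + 1 : R) * (ascPochhammer R m).eval (t + 1) := by
  ext t
  have := congr_arg (eval t) (ascPochhammer_succ_comp_X_add_one (S := R) m)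
  simp only [eval_comp, eval_add, eval_X, eval_one, nsmul_eq_mul] at this
  simp [fwdDiff, this]

lemma fwdDiff_iter_ascPochhammer_eval (m n : ℕ) (t : R) :
    Δ_[1] ^[n] (fun t : R ↦ (ascPochhammer R m).eval t) t =
      m.descFactorial n * (ascPochhammer R (m - n)).eval (t + n) := by
  induction n generalizing m t with
  | zero => simp
  | succ n ih =>
    rw [Function.iterate_succ_apply]
    cases m with
    | zero => simp [fwdDiff_iter_eq_sum_shift]
    | succ m =>
      have hΔ : Δ_[1] (fun t : R ↦ (ascPochhammer R (m + 1)).eval t) =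
          (m + 1 : R) • fun t ↦ (ascPochhammer R m).eval (t + 1) := by
        rw [fwdDiff_ascPochhammer_eval_succ]; rfl
      rw [hΔ, fwdDiff_iter_const_smul, Pi.smul_apply,
        fwdDiff_iter_comp_add 1 (fun t : R ↦ (ascPochhammer R m).eval t) 1, ih,
        Nat.succ_descFactorial_succ, Nat.add_sub_add_right, smul_eq_mul]
      rw [add_right_comm t 1, add_assoc t]
      push_cast
      ring

end ForwardDifference

lemma fwdDiff_iter_comp_natCast_add {R G : Type*} [AddCommMonoidWithOne R] [AddCommGroup G]
    (g : R → G) (y : R) (n : ℕ) :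
    Δ_[1] ^[n] (fun j : ℕ ↦ g (y + j)) 0 = Δ_[1] ^[n] g y := by
  simp [fwdDiff_iter_eq_sum_shift]

lemma ofReal_Gamma_add_nat_div_Gamma {t : ℝ} (ht : ∀ k : ℕ, t ≠ -k) (n : ℕ) :
    ((Real.Gamma (t + n) / Real.Gamma t : ℝ) : ℂ) = (ascPochhammer ℂ n).eval (t : ℂ) := by
  rw [← Complex.Gamma_add_nat_div_Gamma_eq _ fun k ↦ by exact_mod_cast ht k]
  push_cast [← Complex.Gamma_ofReal]
  rfl

lemma norm_ascPochhammer_eval_le {𝕜 : Type*} [NormedCommRing 𝕜] [NormOneClass 𝕜] (n : ℕ) (w : 𝕜) :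
    ‖(ascPochhammer 𝕜 n).eval w‖ ≤ (‖w‖ + n) ^ n := by
  induction n with
  | zero => simp
  | succ n ih =>
    have hw : ‖w + n‖ ≤ ‖w‖ + n := by grw [norm_add_le, Nat.norm_cast_le, norm_one, mul_one]
    rw [ascPochhammer_succ_eval, pow_succ]
    grw [norm_mul_le, ih, hw]
    gcongr <;> simp

lemma summable_norm_pow_div_factorial_mul_ascPochhammer (x c : ℂ) (m : ℕ) :
    Summable fun j : ℕ ↦ ‖x ^ j / j.factorial * (ascPochhammer ℂ m).eval (c + j)‖ := by
  refine .of_nonneg_of_le (fun _ ↦ norm_nonneg _) (fun j ↦ ?_)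
    ((Real.summable_pow_div_factorial (‖x‖ * Real.exp 1)).mul_left
      (m.factorial * Real.exp (‖c‖ + m)))
  have hpoly : ‖(ascPochhammer ℂ m).eval (c + j)‖ ≤ m.factorial * Real.exp (‖c‖ + j + m) := by
    have hy : 0 ≤ ‖c‖ + j + m := by positivity
    have := Real.pow_div_factorial_le_exp _ hy m
    rw [div_le_iff₀ (by positivity)] at this
    grw [norm_ascPochhammer_eval_le, norm_add_le, Complex.norm_natCast]
    linarith
  rw [norm_mul, norm_div, norm_pow, Complex.norm_natCast]
  grw [hpoly]
  rw [mul_pow, Real.exp_one_pow, show ‖c‖ + j + m = (‖c‖ + m) + j by ring, Real.exp_add]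
  exact le_of_eq (by ring)

lemma exp_neg_mul_tsum_eq_tsum_fwdDiff_iter (x : ℂ) (f : ℕ → ℂ)
    (hf : Summable fun j ↦ ‖x ^ j / j.factorial * f j‖) :
    Complex.exp (-x) * ∑' j, x ^ j / j.factorial * f j =
      ∑' n, x ^ n / n.factorial * Δ_[1] ^[n] f 0 := by
  have hexp : Summable fun k ↦ ‖(-x) ^ k / k.factorial‖ := by
    simpa [norm_div, norm_pow] using Real.summable_pow_div_factorial ‖x‖
  rw [Complex.exp_eq_exp_ℂ, ← (NormedSpace.expSeries_div_hasSum_exp (-x)).tsum_eq, mul_comm,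
    tsum_mul_tsum_eq_tsum_sum_range_of_summable_norm hf hexp]
  refine tsum_congr fun n ↦ ?_
  rw [fwdDiff_iter_eq_sum_shift, mul_sum]
  refine sum_congr rfl fun k hk ↦ ?_
  have hkn : k ≤ n := Nat.lt_succ_iff.mp (mem_range.mp hk)
  have hx : x ^ n = x ^ k * x ^ (n - k) := by rw [← pow_add, Nat.add_sub_cancel' hkn]
  rw [zsmul_eq_mul, zero_add, smul_eq_mul, mul_one, hx, neg_pow]
  push_cast
  rw [Nat.cast_choose ℂ hkn]
  have : (n.factorial : ℂ) ≠ 0 := by exact_mod_cast n.factorial_ne_zero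
  field_simp

lemma integrableOn_rpow_mul_exp_neg {t : ℝ} (ht : 0 < t) :
    IntegrableOn (fun s : ℝ ↦ s ^ (t - 1) * Real.exp (-s)) (Set.Ioi 0) :=
  (Real.GammaIntegral_convergent ht).congr_fun (fun _ _ ↦ mul_comm _ _) measurableSet_Ioi

lemma integral_rpow_mul_exp_neg {t : ℝ} (ht : 0 < t) :
    ∫ s in Set.Ioi (0 : ℝ), s ^ (t - 1) * Real.exp (-s) = Real.Gamma t := by
  rw [Real.Gamma_eq_integral ht]
  exact setIntegral_congr_fun measurableSet_Ioi fun _ _ ↦ mul_comm _ _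

lemma integral_tsum_mul_rpow_mul_exp_neg {t : ℝ} (ht : 0 < t) (c : ℕ → ℂ)
    (hc : Summable fun j ↦ ‖c j‖ * Real.Gamma (t + j)) :
    ∫ s in Set.Ioi (0 : ℝ), (∑' j, c j * (s : ℂ) ^ j) * ((s ^ (t - 1) * Real.exp (-s) : ℝ) : ℂ)
      = ∑' j, c j * Real.Gamma (t + j) := by
  set F : ℕ → ℝ → ℂ := fun j s ↦ c j * ((s ^ (t + j - 1) * Real.exp (-s) : ℝ) : ℂ)
  have htj (j : ℕ) : 0 < t + j := by positivity
  have hF_int (j : ℕ) : Integrable (F j) (volume.restrict (Set.Ioi 0)) :=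
    (integrableOn_rpow_mul_exp_neg (htj j)).ofReal.const_mul (c j)
  have hF_norm (j : ℕ) : ∫ s in Set.Ioi (0 : ℝ), ‖F j s‖ = ‖c j‖ * Real.Gamma (t + j) := by
    rw [← integral_rpow_mul_exp_neg (htj j), ← integral_const_mul]
    refine setIntegral_congr_fun measurableSet_Ioi fun s (hs : 0 < s) ↦ ?_
    rw [norm_mul, Complex.norm_real, Real.norm_of_nonneg (by positivity)]
  have hF_sum (s : ℝ) (hs : s ∈ Set.Ioi 0) :
      (∑' j, c j * (s : ℂ) ^ j) * ((s ^ (t - 1) * Real.exp (-s) : ℝ) : ℂ) = ∑' j, F j s := by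
    rw [← tsum_mul_right]
    refine tsum_congr fun j ↦ ?_
    simp only [F]
    rw [show t + j - 1 = j + (t - 1) by ring, Real.rpow_add hs, Real.rpow_natCast]
    push_cast
    ring
  rw [setIntegral_congr_fun measurableSet_Ioi hF_sum,
    ← integral_tsum_of_summable_integral_norm hF_int (by simpa only [hF_norm] using hc)]
  refine tsum_congr fun j ↦ ?_
  rw [integral_const_mul, integral_complex_ofReal, integral_rpow_mul_exp_neg (htj j)]

lemma integral_wth_mul_pow_mul_rpow_mul_exp_neg {θ : ℝ} (hθ : 0 < θ) (x : ℂ) (m : ℕ) :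
    ∫ s in Set.Ioi (0 : ℝ), wth θ (s * x) * (s : ℂ) ^ m * ((s ^ (θ - 1) * Real.exp (-s) : ℝ) : ℂ)
      = ∑' j : ℕ, x ^ j / j.factorial * (ascPochhammer ℂ m).eval ((θ : ℂ) + j) := by
  set c : ℕ → ℂ := fun j ↦ x ^ j / (j.factorial * Real.Gamma (θ + j))
  have hcoeff (j : ℕ) : c j * Real.Gamma (θ + m + j) =
      x ^ j / j.factorial * (ascPochhammer ℂ m).eval ((θ : ℂ) + j) := by
    have hθj : 0 < θ + j := by positivity
    have hratio := ofReal_Gamma_add_nat_div_Gamma (t := θ + j)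
      (fun k ↦ by linarith [k.cast_nonneg (α := ℝ)]) m
    push_cast at hratio
    have : (Real.Gamma (θ + j) : ℂ) ≠ 0 := by exact_mod_cast (Real.Gamma_pos_of_pos hθj).ne'
    rw [show θ + m + j = θ + j + m by ring, ← hratio]
    simp only [c]
    field_simp
  have hintegrand (s : ℝ) (hs : s ∈ Set.Ioi 0) :
      wth θ (s * x) * (s : ℂ) ^ m * ((s ^ (θ - 1) * Real.exp (-s) : ℝ) : ℂ) =
        (∑' j, c j * (s : ℂ) ^ j) * ((s ^ (θ + m - 1) * Real.exp (-s) : ℝ) : ℂ) := by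
    have hwth : wth θ (s * x) = ∑' j, c j * (s : ℂ) ^ j :=
      tsum_congr fun j ↦ by simp only [c]; ring
    rw [hwth, show θ + m - 1 = m + (θ - 1) by ring, Real.rpow_add hs, Real.rpow_natCast]
    push_cast
    ring
  have hsummable : Summable fun j ↦ ‖c j‖ * Real.Gamma (θ + m + j) := by
    refine (summable_norm_pow_div_factorial_mul_ascPochhammer x θ m).congr fun j ↦ ?_
    rw [← hcoeff, norm_mul, Complex.norm_real,
      Real.norm_of_nonneg (Real.Gamma_pos_of_pos (by positivity)).le]
  rw [setIntegral_congr_fun measurableSet_Ioi hintegrand,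
    integral_tsum_mul_rpow_mul_exp_neg (by positivity) c hsummable]
  exact tsum_congr hcoeff

lemma ofReal_gam_div_gam {θ : ℝ} (hθ : 0 < θ) {m n : ℕ} (hnm : n ≤ m) :
    ((gam θ m / gam θ n : ℝ) : ℂ) =
      m.factorial / n.factorial * (ascPochhammer ℂ (m - n)).eval ((θ : ℂ) + n) := by
  have hθn : 0 < θ + n := by positivity
  have hratio := ofReal_Gamma_add_nat_div_Gamma (t := θ + n)
    (fun k ↦ by linarith [k.cast_nonneg (α := ℝ)]) (m - n)
  rw [Nat.cast_sub hnm, show θ + n + (m - n : ℝ) = θ + m by ring] at hratio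
  push_cast at hratio
  have : (Real.Gamma (θ + n) : ℂ) ≠ 0 := by exact_mod_cast (Real.Gamma_pos_of_pos hθn).ne'
  rw [← hratio, gam, gam]
  push_cast
  field_simp

lemma integral_wth_div_mul_pow_mul_rpow_mul_exp_neg {θ : ℝ} (hθ : 0 < θ) (a z : ℂ) (m : ℕ) :
    ∫ s in Set.Ioi (0 : ℝ),
        wth θ (s * z / a) * (a * s) ^ m * ((s ^ (θ - 1) * Real.exp (-s) : ℝ) : ℂ)
      = a ^ m * ∑' j : ℕ, (z / a) ^ j / j.factorial * (ascPochhammer ℂ m).eval ((θ : ℂ) + j) := by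
  rw [← integral_wth_mul_pow_mul_rpow_mul_exp_neg hθ, ← integral_const_mul]
  congr 1 with s
  rw [mul_div_assoc, mul_pow]
  ring

theorem stmt13 (θ a : ℝ) (hθ : 0 < θ) (ha : 0 < a) (m : ℕ) (z : ℂ) :
    Complex.exp (-z / (a : ℂ)) *
      ∫ s in Set.Ioi (0 : ℝ),
        wth θ ((s : ℂ) * z / (a : ℂ)) * ((a : ℂ) * (s : ℂ)) ^ m *
          ((s ^ (θ - 1) * Real.exp (-s) : ℝ) : ℂ)
    = ∑ k ∈ Finset.range (m + 1),
        (a : ℂ) ^ k / (k.factorial : ℂ) * ((gam θ m / gam θ (m - k) : ℝ) : ℂ) *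
          z ^ (m - k) := by
  have hdiff (n : ℕ) :
      Δ_[1] ^[n] (fun j : ℕ ↦ (ascPochhammer ℂ m).eval ((θ : ℂ) + j)) 0 =
        m.descFactorial n * (ascPochhammer ℂ (m - n)).eval ((θ : ℂ) + n) := by
    rw [fwdDiff_iter_comp_natCast_add (fun w ↦ (ascPochhammer ℂ m).eval w),
      fwdDiff_iter_ascPochhammer_eval]
  rw [integral_wth_div_mul_pow_mul_rpow_mul_exp_neg hθ, neg_div, mul_left_comm,
    exp_neg_mul_tsum_eq_tsum_fwdDiff_iter _ _
      (summable_norm_pow_div_factorial_mul_ascPochhammer _ θ m)]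
  simp_rw [hdiff]
  rw [tsum_eq_sum (s := range (m + 1)) fun n hn ↦ by
      rw [Nat.descFactorial_eq_zero_iff_lt.mpr (by simpa using hn)]; simp,
    mul_sum]
  conv_rhs => rw [← sum_range_reflect]
  refine sum_congr rfl fun n hn ↦ ?_
  have hnm : n ≤ m := Nat.lt_succ_iff.mp (mem_range.mp hn)
  have hfact : ((m - n).factorial * m.descFactorial n : ℂ) = m.factorial := by
    exact_mod_cast Nat.factorial_mul_descFactorial hnm
  have hpow : (a : ℂ) ^ m = a ^ (m - n) * a ^ n := by rw [← pow_add, Nat.sub_add_cancel hnm]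
  have ha0 : (a : ℂ) ≠ 0 := by exact_mod_cast ha.ne'
  have : ((m - n).factorial : ℂ) ≠ 0 := by exact_mod_cast (m - n).factorial_ne_zero
  rw [Nat.add_sub_cancel, Nat.sub_sub_self hnm, ofReal_gam_div_gam hθ hnm, div_pow, hpow, ← hfact]
  field_simp
end

section
/- Norm estimate: let ‖f‖_b = sup_{k∈ℕ₀} b^{−k} |f^{(k)}(0)| for b > 0 and an entire function f. For θ ≥ 0 and a, b > 0 with ab < 1, and for polynomials φ, f, the polynomial g = φ(Δ_θ)f := Σ_k (φ^{(k)}(0)/k!) Δ_θ^k f satisfies ‖g‖_c ≤ (1 − ab)^{−θ} ‖φ‖_a ‖f‖_b, where c = b/(1 − ab). -/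
/-!
`Δ_θ` sends `z ^ (m + 1)` to `(m + 1) (θ + m) z ^ m`, so the `n`-th coefficient of
`g = φ(Δ_θ) f` is `∑ₖ φₖ f_{n+k} (n+k)!/n! · (θ+n)⁽ᵏ⁾` with the rising factorial `(θ+n)⁽ᵏ⁾`.
Inserting `k! |φₖ| ≤ ‖φ‖_a aᵏ` and `(n+k)! |f_{n+k}| ≤ ‖f‖_b b^{n+k}` gives
`n! |gₙ| ≤ ‖φ‖_a ‖f‖_b bⁿ ∑ₖ (θ+n)⁽ᵏ⁾ (ab)ᵏ / k!`, a partial sum of the binomial series of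
`(1 - ab)^{-(θ+n)}` with nonnegative terms. The weight `c⁻ⁿ = ((1 - ab)/b)ⁿ` cancels `bⁿ` and
the factor `(1 - ab)^{-n}`.
-/

/-- `Δ_θ p = θ p' + z p''` on polynomials. -/
noncomputable def Dthp (θ : ℝ) (p : Polynomial ℂ) : Polynomial ℂ :=
  (θ : ℂ) • Polynomial.derivative p
    + Polynomial.X * Polynomial.derivative (Polynomial.derivative p)

/-- The norm `‖p‖_b = sup_k b^{-k} |p^{(k)}(0)| = sup_k b^{-k} |k!·coeff k p|`. -/
noncomputable def pnorm (b : ℝ) (p : Polynomial ℂ) : ℝ :=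
  ⨆ k : ℕ, b ^ (-(k : ℤ)) * ‖(k.factorial : ℂ) * p.coeff k‖

open Finset Polynomial

section

-- `open Nat` is kept local: it would make `φ` in the statement of `stmt15` denote `Nat.totient`.
open Nat

lemma Ring.choose_add_sub_one_eq_ascPochhammer_eval_div {K : Type*} [Field K] [CharZero K]
    (s : K) (k : ℕ) : Ring.choose (s + k - 1) k = (ascPochhammer K k).eval s / k ! := by
  rw [← Ring.multichoose_eq, eq_div_iff (cast_ne_zero.2 k.factorial_ne_zero),
    ← ascPochhammer_smeval_eq_eval,
    ← Ring.factorial_nsmul_multichoose_eq_ascPochhammer, nsmul_eq_mul, mul_comm]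

lemma Real.hasSum_ascPochhammer_eval_div_factorial_mul_pow (s : ℝ) {x : ℝ} (hx : |x| < 1) :
    HasSum (fun k ↦ (ascPochhammer ℝ k).eval s / k ! * x ^ k) ((1 - x) ^ (-s)) := by
  have hball : x ∈ Metric.eball (0 : ℝ) 1 := by
    simpa [enorm_eq_nnnorm, ← NNReal.coe_lt_coe] using hx
  have := (Real.one_div_one_sub_rpow_hasFPowerSeriesOnBall_zero s).hasSum hball
  simpa [FormalMultilinearSeries.ofScalars_apply_eq,
    Ring.choose_add_sub_one_eq_ascPochhammer_eval_div,
    Real.rpow_neg (by linarith [le_abs_self x] : 0 ≤ 1 - x), mul_comm] using this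

lemma ascPochhammer_eval_nonneg {s : ℝ} (hs : 0 ≤ s) (k : ℕ) :
    0 ≤ (ascPochhammer ℝ k).eval s := by
  induction k with
  | zero => simp
  | succ k ih => rw [ascPochhammer_succ_eval]; positivity

lemma sum_range_ascPochhammer_eval_div_factorial_mul_pow_le {s x : ℝ} (hs : 0 ≤ s) (hx : 0 ≤ x)
    (hx1 : x < 1) (K : ℕ) :
    ∑ k ∈ range K, (ascPochhammer ℝ k).eval s / k ! * x ^ k ≤ (1 - x) ^ (-s) :=
  sum_le_hasSum _ (fun k _ ↦ by have := ascPochhammer_eval_nonneg hs k; positivity)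
    (Real.hasSum_ascPochhammer_eval_div_factorial_mul_pow s (abs_lt.2 ⟨by linarith, hx1⟩))

lemma coeff_Dthp (θ : ℝ) (p : ℂ[X]) (n : ℕ) :
    (Dthp θ p).coeff n = ((n : ℂ) + 1) * ((θ : ℂ) + n) * p.coeff (n + 1) := by
  cases n with
  | zero => simp [Dthp, coeff_derivative]
  | succ m =>
    simp [Dthp, coeff_derivative, coeff_X_mul]
    ring

lemma coeff_iterate_Dthp (θ : ℝ) (k : ℕ) (p : ℂ[X]) (n : ℕ) :
    ((Dthp θ)^[k] p).coeff n
      = (((n + 1).ascFactorial k * (ascPochhammer ℝ k).eval (θ + n) : ℝ) : ℂ)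
        * p.coeff (n + k) := by
  induction k generalizing p with
  | zero => simp
  | succ k ih =>
    rw [Function.iterate_succ_apply, ih, coeff_Dthp, ascFactorial_succ, ascPochhammer_succ_eval]
    push_cast
    rw [← add_assoc n k 1]
    ring

lemma bddAbove_range_pnorm (b : ℝ) (p : ℂ[X]) :
    BddAbove (Set.range fun k : ℕ ↦ b ^ (-(k : ℤ)) * ‖(k ! : ℂ) * p.coeff k‖) := by
  refine (((Set.finite_Iic p.natDegree).image
    fun k : ℕ ↦ b ^ (-(k : ℤ)) * ‖(k ! : ℂ) * p.coeff k‖).insert 0).bddAbove.mono ?_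
  rintro _ ⟨k, rfl⟩
  rcases le_or_gt k p.natDegree with hk | hk
  · exact Set.mem_insert_of_mem _ ⟨k, hk, rfl⟩
  · simp [coeff_eq_zero_of_natDegree_lt hk]

lemma pnorm_nonneg (b : ℝ) (p : ℂ[X]) : 0 ≤ pnorm b p :=
  (norm_nonneg (p.coeff 0)).trans (by simpa [pnorm] using le_ciSup (bddAbove_range_pnorm b p) 0)

lemma factorial_mul_norm_coeff_le_pnorm {b : ℝ} (hb : 0 < b) (p : ℂ[X]) (k : ℕ) :
    k ! * ‖p.coeff k‖ ≤ pnorm b p * b ^ k := by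
  have : _ ≤ pnorm b p := le_ciSup (bddAbove_range_pnorm b p) k
  rw [zpow_neg, zpow_natCast, norm_mul, Complex.norm_natCast, inv_mul_le_iff₀ (by positivity)]
    at this
  linarith

lemma factorial_mul_norm_coeff_sum_iterate_Dthp_le {θ a b : ℝ} (hθ : 0 ≤ θ) (ha : 0 < a)
    (hb : 0 < b) (hab : a * b < 1) (p f : ℂ[X]) (K n : ℕ) :
    n ! * ‖(∑ k ∈ range K, p.coeff k • (Dthp θ)^[k] f).coeff n‖
      ≤ pnorm a p * pnorm b f * b ^ n * (1 - a * b) ^ (-(θ + n)) := by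
  have hP : ∀ k, 0 ≤ (ascPochhammer ℝ k).eval (θ + n) :=
    ascPochhammer_eval_nonneg (by positivity)
  calc n ! * ‖(∑ k ∈ range K, p.coeff k • (Dthp θ)^[k] f).coeff n‖
      ≤ ∑ k ∈ range K, n ! * (‖p.coeff k‖ * ((n + 1).ascFactorial k
          * (ascPochhammer ℝ k).eval (θ + n) * ‖f.coeff (n + k)‖)) := by
        simp only [finsetSum_coeff, coeff_smul, smul_eq_mul, coeff_iterate_Dthp, ← mul_sum]
        gcongr
        refine (norm_sum_le _ _).trans_eq (sum_congr rfl fun k _ ↦ ?_)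
        have := hP k
        rw [norm_mul, norm_mul, Complex.norm_real, Real.norm_of_nonneg (by positivity)]
    _ = ∑ k ∈ range K, (k ! * ‖p.coeff k‖) * ((n + k)! * ‖f.coeff (n + k)‖)
          * ((ascPochhammer ℝ k).eval (θ + n) / k !) := by
        refine sum_congr rfl fun k _ ↦ ?_
        rw [← factorial_mul_ascFactorial]
        push_cast
        field_simp
    _ ≤ ∑ k ∈ range K, (pnorm a p * a ^ k) * (pnorm b f * b ^ (n + k))
          * ((ascPochhammer ℝ k).eval (θ + n) / k !) := by
        have := pnorm_nonneg a p
        refine sum_le_sum fun k _ ↦ ?_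
        gcongr ?_ * ?_ * _
        · exact div_nonneg (hP k) (by positivity)
        · exact factorial_mul_norm_coeff_le_pnorm ha p k
        · exact factorial_mul_norm_coeff_le_pnorm hb f (n + k)
    _ = pnorm a p * pnorm b f * b ^ n
          * ∑ k ∈ range K, (ascPochhammer ℝ k).eval (θ + n) / k ! * (a * b) ^ k := by
        rw [mul_sum]
        refine sum_congr rfl fun k _ ↦ ?_
        ring
    _ ≤ pnorm a p * pnorm b f * b ^ n * (1 - a * b) ^ (-(θ + n)) := by
        have := pnorm_nonneg a p
        have := pnorm_nonneg b f
        gcongr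
        exact sum_range_ascPochhammer_eval_div_factorial_mul_pow_le (by positivity)
          (by positivity) hab K

end

theorem stmt15 (θ a b : ℝ) (hθ : 0 ≤ θ) (ha : 0 < a) (hb : 0 < b) (hab : a * b < 1)
    (φ f : Polynomial ℂ) :
    pnorm (b / (1 - a * b))
        (∑ k ∈ Finset.range (φ.natDegree + 1), φ.coeff k • (Dthp θ)^[k] f)
      ≤ ((1 - a * b) ^ (-θ) : ℝ) * pnorm a φ * pnorm b f := by
  have hu : 0 < 1 - a * b := by linarith
  refine ciSup_le fun n ↦ ?_
  rw [norm_mul, Complex.norm_natCast, zpow_neg, zpow_natCast, ← inv_pow, inv_div]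
  calc ((1 - a * b) / b) ^ n * (_ * ‖_‖)
      ≤ ((1 - a * b) / b) ^ n * (pnorm a φ * pnorm b f * b ^ n * (1 - a * b) ^ (-(θ + n))) := by
        have := factorial_mul_norm_coeff_sum_iterate_Dthp_le hθ ha hb hab φ f (φ.natDegree + 1) n
        gcongr
    _ = (1 - a * b) ^ (-θ) * pnorm a φ * pnorm b f := by
        rw [Real.rpow_neg hu.le, Real.rpow_add hu, Real.rpow_natCast, Real.rpow_neg hu.le,
          div_pow]
        field_simp
end
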